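/- If π : [0,1] → ℝ is continuously differentiable with π(z) integrating to 0 over [0,1] (and suitable integrability of π_k at the endpoints), then ∫_{-∞}^{∞} π'(Φ(x)) φ(x)² dx = ∫_0^1 π(z) Φ⁻¹(z) dz, i.e. E[π'(Z)φ(e)] = c₁ where Z = Φ(e) and e ~ N(0,1). -/

import Mathlib

open MeasureTheory ProbabilityTheory intervalIntegral

noncomputable def stdNormalPDF (x : ℝ) : ℝ := gaussianPDFReal 0 1 x

noncomputable def stdNormalCDF (x : ℝ) : ℝ :=
  ∫ t in Set.Iic x, stdNormalPDF t

/-!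
Integrate by parts on the whole line, with `u = π ∘ Φ` and `v = φ`: since `φ' x = -x φ x` and
`π ∘ Φ` is bounded, `∫ π'(Φ x) φ(x)² dx = ∫ π(Φ x) x φ(x) dx`. The substitution `z = Φ x`, a
diffeomorphism of `ℝ` onto `(0, 1)` with `Φ⁻¹(Φ x) = x`, turns the right-hand side into
`∫₀¹ π(z) Φ⁻¹(z) dz`.
-/

open Set

lemma stdNormalPDF_eq (x : ℝ) :
    stdNormalPDF x = (Real.sqrt (2 * Real.pi))⁻¹ * Real.exp (-(1 / 2) * x ^ 2) := by
  simp only [stdNormalPDF, gaussianPDFReal]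
  congr 2 <;> simp; ring

lemma stdNormalPDF_pos (x : ℝ) : 0 < stdNormalPDF x := gaussianPDFReal_pos 0 1 x one_ne_zero

lemma continuous_stdNormalPDF : Continuous stdNormalPDF := by
  simp only [funext stdNormalPDF_eq]
  fun_prop

lemma hasDerivAt_stdNormalPDF (x : ℝ) : HasDerivAt stdNormalPDF (-x * stdNormalPDF x) x := by
  simp only [funext stdNormalPDF_eq]
  refine ((((hasDerivAt_pow 2 x).const_mul (-(1 / 2) : ℝ)).exp).const_mul
    (Real.sqrt (2 * Real.pi))⁻¹).congr_deriv ?_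
  norm_num
  ring

lemma integrable_stdNormalPDF : Integrable stdNormalPDF := integrable_gaussianPDFReal 0 1

lemma integrable_mul_stdNormalPDF : Integrable fun x => x * stdNormalPDF x := by
  simpa [stdNormalPDF_eq, mul_left_comm] using
    (integrable_mul_exp_neg_mul_sq (by norm_num : (0:ℝ) < 1 / 2)).const_mul
      (Real.sqrt (2 * Real.pi))⁻¹

lemma integrable_stdNormalPDF_sq : Integrable fun x => stdNormalPDF x ^ 2 := by
  refine ((integrable_exp_neg_mul_sq one_pos).const_mul ((Real.sqrt (2 * Real.pi))⁻¹ ^ 2)).congr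
    (ae_of_all _ fun x => ?_)
  simp only [stdNormalPDF_eq, mul_pow, ← Real.exp_nat_mul]
  ring_nf

lemma stdNormalCDF_eq_cdf : stdNormalCDF = cdf (gaussianReal 0 1) := by
  funext x
  rw [cdf_eq_real, measureReal_def, gaussianReal_apply_eq_integral 0 one_ne_zero,
    ENNReal.toReal_ofReal (setIntegral_nonneg measurableSet_Iic
      fun t _ => gaussianPDFReal_nonneg 0 1 t)]
  rfl

lemma hasDerivAt_stdNormalCDF (x : ℝ) : HasDerivAt stdNormalCDF (stdNormalPDF x) x := by
  have hΦ : stdNormalCDF = fun y => stdNormalCDF 0 + ∫ t in (0:ℝ)..y, stdNormalPDF t := by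
    funext y
    rw [← integral_Iic_sub_Iic integrable_stdNormalPDF.integrableOn
      integrable_stdNormalPDF.integrableOn, stdNormalCDF, stdNormalCDF]
    ring
  rw [hΦ]
  exact (integral_hasDerivAt_right (continuous_stdNormalPDF.intervalIntegrable 0 x)
    (continuous_stdNormalPDF.stronglyMeasurableAtFilter _ _)
    continuous_stdNormalPDF.continuousAt).const_add _

lemma continuous_stdNormalCDF : Continuous stdNormalCDF :=
  continuous_iff_continuousAt.mpr fun x => (hasDerivAt_stdNormalCDF x).continuousAt

lemma strictMono_stdNormalCDF : StrictMono stdNormalCDF :=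
  strictMono_of_hasDerivAt_pos hasDerivAt_stdNormalCDF stdNormalPDF_pos

lemma range_stdNormalCDF : range stdNormalCDF = Ioo 0 1 := by
  apply subset_antisymm
  · rintro _ ⟨x, rfl⟩
    constructor
    · calc 0 ≤ stdNormalCDF (x - 1) := stdNormalCDF_eq_cdf ▸ cdf_nonneg _ _
        _ < stdNormalCDF x := strictMono_stdNormalCDF (by linarith)
    · calc stdNormalCDF x < stdNormalCDF (x + 1) := strictMono_stdNormalCDF (by linarith)
        _ ≤ 1 := stdNormalCDF_eq_cdf ▸ cdf_le_one _ _
  · rintro y ⟨hy0, hy1⟩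
    obtain ⟨a, ha⟩ := ((stdNormalCDF_eq_cdf ▸ tendsto_cdf_atBot _).eventually_lt_const hy0).exists
    obtain ⟨b, hb⟩ := ((stdNormalCDF_eq_cdf ▸ tendsto_cdf_atTop _).eventually_const_lt hy1).exists
    exact intermediate_value_univ a b continuous_stdNormalCDF ⟨ha.le, hb.le⟩

lemma stdNormalCDF_mem_Icc (x : ℝ) : stdNormalCDF x ∈ Icc 0 1 :=
  Ioo_subset_Icc_self (range_stdNormalCDF ▸ mem_range_self x)

lemma MeasureTheory.Integrable.comp_stdNormalCDF_mul {g k : ℝ → ℝ} (hg : ContinuousOn g (Icc 0 1))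
    (hk : Integrable k) : Integrable fun x => g (stdNormalCDF x) * k x := by
  obtain ⟨C, hC⟩ := isCompact_Icc.exists_bound_of_continuousOn hg
  exact hk.bdd_mul
    (hg.comp_continuous continuous_stdNormalCDF stdNormalCDF_mem_Icc).aestronglyMeasurable
    (ae_of_all _ fun x => hC _ (stdNormalCDF_mem_Icc x))

lemma integral_deriv_comp_stdNormalCDF_mul_sq {g : ℝ → ℝ} (hg : ContDiff ℝ 1 g) :
    ∫ x, deriv g (stdNormalCDF x) * stdNormalPDF x ^ 2 =
      ∫ x, g (stdNormalCDF x) * (x * stdNormalPDF x) := by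
  have hu (x : ℝ) : HasDerivAt (fun y => g (stdNormalCDF y))
      (deriv g (stdNormalCDF x) * stdNormalPDF x) x :=
    (hg.differentiable one_ne_zero _).hasDerivAt.comp x (hasDerivAt_stdNormalCDF x)
  have hg' : ContinuousOn (deriv g) (Icc 0 1) := (hg.continuous_deriv le_rfl).continuousOn
  have hibp := integral_mul_deriv_eq_deriv_mul_of_integrable (fun x _ => hu x)
    (fun x _ => hasDerivAt_stdNormalPDF x)
    (by simpa only [Pi.mul_def, Pi.neg_def, neg_mul, mul_neg] using
      (integrable_mul_stdNormalPDF.comp_stdNormalCDF_mul hg.continuous.continuousOn).neg)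
    (by simpa only [Pi.mul_def, mul_assoc, sq] using
      integrable_stdNormalPDF_sq.comp_stdNormalCDF_mul hg')
    (integrable_stdNormalPDF.comp_stdNormalCDF_mul hg.continuous.continuousOn)
  simp only [neg_mul, mul_neg, MeasureTheory.integral_neg, neg_inj] at hibp
  simp only [sq, ← mul_assoc, ← hibp]

lemma setIntegral_Ioo_eq_integral_comp_stdNormalCDF (h : ℝ → ℝ) :
    ∫ z in Ioo 0 1, h z = ∫ x, stdNormalPDF x * h (stdNormalCDF x) := by
  rw [← range_stdNormalCDF, ← image_univ, integral_image_eq_integral_abs_deriv_smul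
    MeasurableSet.univ (fun x _ => (hasDerivAt_stdNormalCDF x).hasDerivWithinAt)
    strictMono_stdNormalCDF.injective.injOn, setIntegral_univ]
  simp only [abs_of_pos (stdNormalPDF_pos _), smul_eq_mul]

theorem integral_deriv_comp_cdf_eq_c1_general (π : ℝ → ℝ) (Φinv : ℝ → ℝ)
    (hπ : ContDiff ℝ 1 π)
    (hleft : Function.LeftInverse Φinv stdNormalCDF) :
    ∫ x, deriv π (stdNormalCDF x) * stdNormalPDF x ^ 2 =
      ∫ z in (0:ℝ)..1, π z * Φinv z := by
  calc ∫ x, deriv π (stdNormalCDF x) * stdNormalPDF x ^ 2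
      = ∫ x, stdNormalPDF x * (π (stdNormalCDF x) * Φinv (stdNormalCDF x)) := by
        rw [integral_deriv_comp_stdNormalCDF_mul_sq hπ]
        congr 1 with x
        rw [hleft x]
        ring
    _ = ∫ z in Ioo 0 1, π z * Φinv z :=
        (setIntegral_Ioo_eq_integral_comp_stdNormalCDF fun z => π z * Φinv z).symm
    _ = ∫ z in (0:ℝ)..1, π z * Φinv z := by
        rw [integral_of_le zero_le_one, integral_Ioc_eq_integral_Ioo]

/-- `E[π'(Z) φ(e)] = ∫₀¹ π(z) Φ⁻¹(z) dz` for `e ~ N(0,1)`, `Z = Φ(e)`, when `π` is `C¹`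
with zero mean on `[0,1]` and the relevant integrands are integrable. -/
theorem integral_deriv_comp_cdf_eq_c1 (π : ℝ → ℝ) (Φinv : ℝ → ℝ)
    (hπ : ContDiff ℝ 1 π)
    (hzero : ∫ z in (0:ℝ)..1, π z = 0)
    (hleft : Function.LeftInverse Φinv stdNormalCDF)
    (hint1 : Integrable (fun x => deriv π (stdNormalCDF x) * stdNormalPDF x ^ 2))
    (hint2 : IntervalIntegrable (fun z => π z * Φinv z) volume 0 1) :
    ∫ x, deriv π (stdNormalCDF x) * stdNormalPDF x ^ 2 =
      ∫ z in (0:ℝ)..1, π z * Φinv z :=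
  integral_deriv_comp_cdf_eq_c1_general π Φinv hπ hleft
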